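/- Let σ = (v_0, ..., v_{n-1}) be a permutation of the vertex set of a graph G on n vertices, and let 0 < t < n. Call an edge {v_i, v_j} σ-short if |i − j| ≤ t. Suppose there exist δ ∈ (0,1) and ε > 0 with t = δεn such that every vertex subset S of size at most εn spans at most (1+δ)|S| edges of G. Then the number of σ-short edges of G is at most ((1+δ)/(1−δ))·n. -/

import Mathlib

/-- `σ` separates two (disjoint) edges `e`, `f` of a graph: all vertices of one
precede all vertices of the other in the order given by `σ`. -/
def Separates {V : Type*} (σ : V → ℕ) (e f : Sym2 V) : Prop :=
  (∀ u ∈ e, ∀ w ∈ f, σ u < σ w) ∨ (∀ u ∈ f, ∀ w ∈ e, σ u < σ w)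

/-- A finite family of linear orders (injective maps to ℕ) on the vertices of `G`
is pairwise suitable if every pair of disjoint edges is separated by some member. -/
def PairwiseSuitable {V : Type*} (G : SimpleGraph V) (F : Finset (V → ℕ)) : Prop :=
  (∀ σ ∈ F, Function.Injective σ) ∧
  ∀ e ∈ G.edgeSet, ∀ f ∈ G.edgeSet, (∀ v, v ∈ e → v ∉ f) → ∃ σ ∈ F, Separates σ e f

/-- The separation dimension of `G`: minimum size of a pairwise suitable family. -/
noncomputable def sdim {V : Type*} (G : SimpleGraph V) : ℕ :=
  sInf {k | ∃ F : Finset (V → ℕ), PairwiseSuitable G F ∧ F.card = k}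

/-!
Slide a window of `w = ⌊εn⌋` consecutive positions along `σ`. Summing the expansion bound over
all windows gives at most `(1 + δ) w n` incidences between edges and windows containing them,
while an edge of length `ℓ ≤ t` lies in `w - ℓ` windows. Charging each edge of length exactly `t`
once more (there are at most `n` of them) gives `(w - t + 1) · #short ≤ ((1 + δ) w + 1) n`, and
since `w ≤ εn < w + 1` and `t = δεn` this rearranges to `#short ≤ (1 + δ) / (1 - δ) · n`.
-/

open Finset Function

variable {V : Type*}

def edgeLength (p : V → ℕ) : Sym2 V → ℕ :=
  Sym2.lift ⟨fun a b => ((p a : ℤ) - p b).natAbs, fun _ _ => by dsimp only; omega⟩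

@[simp]
lemma edgeLength_mk (p : V → ℕ) (a b : V) :
    edgeLength p s(a, b) = ((p a : ℤ) - p b).natAbs :=
  rfl

variable [Fintype V]

/-- The `w` consecutive positions ending at `j`, i.e. `(j - w, j]`. -/
def window (p : V → ℕ) (w j : ℕ) : Finset V :=
  {v | p v ≤ j ∧ j < p v + w}

variable {p : V → ℕ}

lemma card_window_le (hp : Injective p) (w j : ℕ) : #(window p w j) ≤ w := by
  simpa using card_le_card_of_injOn (t := range w) (fun v => j - p v)
    (fun v hv => by simp [window] at hv ⊢; omega)
    (fun u hu v hv huv => hp (by simp [window] at hu hv huv; omega))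

namespace SimpleGraph

variable (G : SimpleGraph V) [DecidableRel G.Adj]

def shortEdgeFinset (p : V → ℕ) (t : ℕ) : Finset (Sym2 V) :=
  {e ∈ G.edgeFinset | edgeLength p e ≤ t}

lemma coe_shortEdgeFinset (t : ℕ) :
    (G.shortEdgeFinset p t : Set (Sym2 V))
      = {e ∈ G.edgeSet | ∃ a b, e = s(a, b) ∧ ((p a : ℤ) - p b).natAbs ≤ t} := by
  ext e
  simp only [shortEdgeFinset, coe_filter, mem_edgeFinset, Set.mem_ofPred_eq]
  refine and_congr_right fun _ => ⟨fun h => ?_, ?_⟩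
  · induction e using Sym2.ind with
    | h a b => exact ⟨a, b, rfl, h⟩
  · rintro ⟨a, b, rfl, h⟩
    exact h

end SimpleGraph

variable [DecidableEq V]

lemma card_filter_mem_window {w N : ℕ} {v : V} (hv : p v + w ≤ N) :
    #{j ∈ range N | v ∈ window p w j} = w := by
  rw [show {j ∈ range N | v ∈ window p w j} = Ico (p v) (p v + w) by
    ext j; simp [window]; omega]
  simp

lemma sum_card_window {w N : ℕ} (hN : ∀ v, p v + w ≤ N) :
    ∑ j ∈ range N, #(window p w j) = Fintype.card V * w := by
  have := sum_card_bipartiteAbove_eq_sum_card_bipartiteBelow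
    (fun j v => v ∈ window p w j) (s := range N) (t := univ)
  simp only [bipartiteAbove, bipartiteBelow, filter_mem_eq_inter, univ_inter] at this
  rw [this, sum_congr rfl fun v _ => card_filter_mem_window (hN v)]
  simp

lemma card_filter_subset_window {w N : ℕ} {e : Sym2 V} (he : ∀ v ∈ e, p v + w ≤ N) :
    #{j ∈ range N | ∀ v ∈ e, v ∈ window p w j} = w - edgeLength p e := by
  induction e using Sym2.ind with
  | h a b =>
    simp only [Sym2.mem_iff, forall_eq_or_imp, forall_eq] at he
    rw [show {j ∈ range N | ∀ v ∈ s(a, b), v ∈ window p w j}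
        = Ico (max (p a) (p b)) (min (p a) (p b) + w) by
      ext j; simp [window]; omega]
    simp only [Nat.card_Ico, edgeLength_mk]
    omega

lemma card_filter_edgeLength_eq_le (hp : Injective p) (t : ℕ) :
    #{e : Sym2 V | edgeLength p e = t} ≤ Fintype.card V := by
  have hsub : ({e : Sym2 V | edgeLength p e = t} : Finset (Sym2 V))
      ⊆ ({x : V × V | p x.2 = p x.1 + t} : Finset (V × V)).image fun x => s(x.1, x.2) := by
    intro e he
    induction e using Sym2.ind with
    | h a b =>
      simp only [mem_filter, mem_univ, true_and, edgeLength_mk] at he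
      simp only [mem_image, mem_filter, mem_univ, true_and, Prod.exists]
      rcases le_total (p a) (p b) with hab | hba
      · exact ⟨a, b, by omega, rfl⟩
      · exact ⟨b, a, by omega, Sym2.eq_swap⟩
  calc #{e : Sym2 V | edgeLength p e = t}
      ≤ #({x : V × V | p x.2 = p x.1 + t} : Finset (V × V)) :=
        (card_le_card hsub).trans card_image_le
    _ ≤ #(univ : Finset V) :=
        card_le_card_of_injOn Prod.fst (fun _ _ => mem_univ _)
          (fun x hx y hy hxy => by
            simp only [coe_filter, mem_univ, true_and, Set.mem_ofPred_eq] at hx hy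
            exact Prod.ext hxy (hp (by rw [hx, hy, hxy])))
    _ = Fintype.card V := card_univ

namespace SimpleGraph

variable (G : SimpleGraph V) [DecidableRel G.Adj]

def spannedEdgeFinset (S : Finset V) : Finset (Sym2 V) :=
  {e ∈ G.edgeFinset | ∀ v ∈ e, v ∈ S}

variable {G}

lemma coe_spannedEdgeFinset (S : Finset V) :
    (G.spannedEdgeFinset S : Set (Sym2 V)) = {e ∈ G.edgeSet | ∀ v ∈ e, v ∈ (S : Set V)} := by
  ext; simp [spannedEdgeFinset]

lemma sum_card_spannedEdgeFinset_window {w N : ℕ} (hN : ∀ v, p v + w ≤ N) :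
    ∑ j ∈ range N, #(G.spannedEdgeFinset (window p w j))
      = ∑ e ∈ G.edgeFinset, (w - edgeLength p e) := by
  rw [← sum_congr rfl fun e _ => card_filter_subset_window fun v _ => hN v]
  exact sum_card_bipartiteAbove_eq_sum_card_bipartiteBelow
    (fun j e => ∀ v ∈ e, v ∈ window p w j)

lemma mul_card_shortEdgeFinset_le_sum {w t : ℕ} (hp : Injective p) (htw : t ≤ w) :
    (w - t + 1) * #(G.shortEdgeFinset p t)
      ≤ ∑ e ∈ G.edgeFinset, (w - edgeLength p e) + Fintype.card V := by
  have hlen : ∀ e ∈ G.shortEdgeFinset p t,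
      w - t + 1 ≤ (w - edgeLength p e) + if edgeLength p e = t then 1 else 0 := by
    intro e he
    have := (mem_filter.1 he).2
    split_ifs <;> omega
  calc (w - t + 1) * #(G.shortEdgeFinset p t)
      = ∑ e ∈ G.shortEdgeFinset p t, (w - t + 1) := by rw [sum_const, smul_eq_mul, mul_comm]
    _ ≤ ∑ e ∈ G.shortEdgeFinset p t, (w - edgeLength p e)
          + #{e ∈ G.shortEdgeFinset p t | edgeLength p e = t} := by
        rw [card_filter, ← sum_add_distrib]
        exact sum_le_sum hlen
    _ ≤ ∑ e ∈ G.edgeFinset, (w - edgeLength p e) + Fintype.card V := by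
        gcongr
        · exact filter_subset _ _
        · exact (card_le_card (monotone_filter_left _ (subset_univ _))).trans
            (card_filter_edgeLength_eq_le hp t)

lemma mul_card_shortEdgeFinset_le {c : ℝ} {w t : ℕ} (hp : Injective p) (htw : t ≤ w)
    (hspan : ∀ S : Finset V, #S ≤ w → (#(G.spannedEdgeFinset S) : ℝ) ≤ c * #S) :
    ((w - t + 1 : ℕ) : ℝ) * #(G.shortEdgeFinset p t) ≤ (c * w + 1) * Fintype.card V := by
  set N := univ.sup p + w
  have hN : ∀ v, p v + w ≤ N := fun v => Nat.add_le_add_right (le_sup (mem_univ v)) w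
  have hcount := mul_card_shortEdgeFinset_le_sum (G := G) hp htw
  rw [← sum_card_spannedEdgeFinset_window hN] at hcount
  have hwindows : (∑ j ∈ range N, #(G.spannedEdgeFinset (window p w j)) : ℝ)
      ≤ c * (Fintype.card V * w) := by
    rw [← Nat.cast_mul, ← sum_card_window hN, Nat.cast_sum, mul_sum]
    exact sum_le_sum fun j _ => hspan _ (card_window_le hp w j)
  calc ((w - t + 1 : ℕ) : ℝ) * #(G.shortEdgeFinset p t)
      ≤ (∑ j ∈ range N, #(G.spannedEdgeFinset (window p w j)) : ℝ) + Fintype.card V := by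
        exact_mod_cast hcount
    _ ≤ c * (Fintype.card V * w) + Fintype.card V := by gcongr
    _ = (c * w + 1) * Fintype.card V := by ring

theorem card_shortEdgeFinset_le {c L : ℝ} {t : ℕ} (hp : Injective p) (hc : 1 ≤ c) (htL : t < L)
    (hspan : ∀ S : Finset V, (#S : ℝ) ≤ L → (#(G.spannedEdgeFinset S) : ℝ) ≤ c * #S) :
    (#(G.shortEdgeFinset p t) : ℝ) ≤ c * L / (L - t) * Fintype.card V := by
  set w := ⌊L⌋₊
  have hL : 0 ≤ L := (Nat.cast_nonneg t).trans htL.le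
  have htw : t ≤ w := Nat.le_floor htL.le
  have hwL : (w : ℝ) ≤ L := Nat.floor_le hL
  have hLw : L < w + 1 := Nat.lt_floor_add_one L
  have hcount := mul_card_shortEdgeFinset_le (G := G) hp htw
    fun S hS => hspan S ((Nat.cast_le.2 hS).trans hwL)
  have htw' : (t : ℝ) ≤ w := by exact_mod_cast htw
  push_cast [htw] at hcount
  -- the difference of the two sides is `(c - 1) (L - t) + c t (w + 1 - L)`
  have hwindow : (c * w + 1) * (L - t) ≤ c * L * (w - t + 1) := by
    nlinarith [mul_nonneg (sub_nonneg.2 hc) (sub_nonneg.2 htL.le),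
      mul_nonneg (mul_nonneg (zero_le_one.trans hc) (Nat.cast_nonneg t)) (sub_nonneg.2 hLw.le)]
  rw [div_mul_eq_mul_div, le_div_iff₀ (sub_pos.2 htL)]
  refine le_of_mul_le_mul_left ?_ (by linarith : (0 : ℝ) < w - t + 1)
  calc ((w : ℝ) - t + 1) * (#(G.shortEdgeFinset p t) * (L - t))
      ≤ (c * w + 1) * Fintype.card V * (L - t) := by
        rw [← mul_assoc]; exact mul_le_mul_of_nonneg_right hcount (sub_nonneg.2 htL.le)
    _ ≤ c * L * (w - t + 1) * Fintype.card V := by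
        rw [mul_right_comm]; exact mul_le_mul_of_nonneg_right hwindow (Nat.cast_nonneg _)
    _ = (w - t + 1) * (c * L * Fintype.card V) := by ring

end SimpleGraph

theorem stmt10_general (n : ℕ) (G : SimpleGraph (Fin n)) (σ : Equiv.Perm (Fin n))
    (t : ℕ) (htn : t < n) (δ ε : ℝ)
    (hδ0 : 0 < δ) (hδ1 : δ < 1) (hε : 0 < ε)
    (htval : (t : ℝ) = δ * ε * n)
    (hexp : ∀ S : Set (Fin n), (S.ncard : ℝ) ≤ ε * n →
      (({e ∈ G.edgeSet | ∀ v ∈ e, v ∈ S}).ncard : ℝ) ≤ (1 + δ) * S.ncard) :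
    (({e ∈ G.edgeSet |
        ∃ a b : Fin n, e = s(a, b) ∧ ((σ a : ℤ) - (σ b : ℤ)).natAbs ≤ t}).ncard : ℝ)
      ≤ ((1 + δ) / (1 - δ)) * n := by
  classical
  have hL : 0 < ε * n := mul_pos hε (by exact_mod_cast (Nat.zero_le t).trans_lt htn)
  have htL : (t : ℝ) < ε * n := by rw [htval, mul_assoc]; exact mul_lt_of_lt_one_left hL hδ1
  have hshort := G.card_shortEdgeFinset_le (p := fun v => (σ v : ℕ)) (c := 1 + δ)
    (fun _ _ h => σ.injective (Fin.val_injective h)) (by linarith) htL fun S hS => by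
      rw [← Set.ncard_coe_finset, SimpleGraph.coe_spannedEdgeFinset]
      simpa only [Set.ncard_coe_finset] using hexp S (by rwa [Set.ncard_coe_finset])
  rw [Fintype.card_fin] at hshort
  rw [← SimpleGraph.coe_shortEdgeFinset (p := fun v => (σ v : ℕ)), Set.ncard_coe_finset]
  convert hshort using 2
  rw [htval, show ε * n - δ * ε * n = (1 - δ) * (ε * n) by ring, mul_div_mul_right _ _ hL.ne']

theorem stmt10 (n : ℕ) (G : SimpleGraph (Fin n)) (σ : Equiv.Perm (Fin n))
    (t : ℕ) (ht0 : 0 < t) (htn : t < n) (δ ε : ℝ)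
    (hδ0 : 0 < δ) (hδ1 : δ < 1) (hε : 0 < ε)
    (htval : (t : ℝ) = δ * ε * n)
    (hexp : ∀ S : Set (Fin n), (S.ncard : ℝ) ≤ ε * n →
      (({e ∈ G.edgeSet | ∀ v ∈ e, v ∈ S}).ncard : ℝ) ≤ (1 + δ) * S.ncard) :
    (({e ∈ G.edgeSet |
        ∃ a b : Fin n, e = s(a, b) ∧ ((σ a : ℤ) - (σ b : ℤ)).natAbs ≤ t}).ncard : ℝ)
      ≤ ((1 + δ) / (1 - δ)) * n :=
  stmt10_general n G σ t htn δ ε hδ0 hδ1 hε htval hexp
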